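/- For every r ≥ 2, t ≥ 3 and n, there exists an (r,S_t)-extremal graph G on n vertices such that the maximum degree of G is at most r(t−1)−1 and all but at most ⌈r/2⌉·(t−1)+1 vertices of G have degree at least ⌈r/2⌉·(t−1). -/

import Mathlib

open SimpleGraph Finset

/-- `G` contains a copy of `H`, i.e. a subgraph isomorphic to `H`. -/
def SimpleGraph.ContainsCopy {V W : Type*} (G : SimpleGraph V) (H : SimpleGraph W) : Prop :=
  ∃ f : H →g G, Function.Injective f

/-- The color class of color `i` in the `r`-edge-coloring `c` of `G`. -/
def colorClass {V : Type*} {r : ℕ} (G : SimpleGraph V) (c : G.edgeSet → Fin r) (i : Fin r) :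
    SimpleGraph V :=
  SimpleGraph.fromEdgeSet {e | ∃ h : e ∈ G.edgeSet, c ⟨e, h⟩ = i}

/-- The coloring `c` of `G` has a monochromatic copy of `H`. -/
def HasMonoCopy {V W : Type*} {r : ℕ} (G : SimpleGraph V) (H : SimpleGraph W)
    (c : G.edgeSet → Fin r) : Prop :=
  ∃ i : Fin r, (colorClass G c i).ContainsCopy H

/-- `c_{r,H}(G)`: the number of `r`-edge-colorings of `G` without a monochromatic copy of `H`. -/
noncomputable def goodCount {V W : Type*} (r : ℕ) (H : SimpleGraph W) (G : SimpleGraph V) : ℕ :=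
  Nat.card {c : G.edgeSet → Fin r // ¬ HasMonoCopy G H c}

/-- `c_{r,H}(n)`: the maximum of `c_{r,H}(G)` over all graphs `G` on `n` vertices. -/
noncomputable def cMax {W : Type*} (r : ℕ) (H : SimpleGraph W) (n : ℕ) : ℕ :=
  sSup {k | ∃ G : SimpleGraph (Fin n), goodCount r H G = k}

/-- `ex(n,H)`: the maximum number of edges of an `H`-free graph on `n` vertices. -/
noncomputable def exNum {W : Type*} (n : ℕ) (H : SimpleGraph W) : ℕ :=
  sSup {k | ∃ G : SimpleGraph (Fin n), ¬ G.ContainsCopy H ∧ G.edgeSet.ncard = k}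

/-- The star `S_t` with `t` edges: center `0` joined to `t` leaves. -/
def starGraph (t : ℕ) : SimpleGraph (Fin (t + 1)) where
  Adj u v := u ≠ v ∧ (u = 0 ∨ v = 0)
  symm := ⟨fun u v h => ⟨h.1.symm, h.2.symm⟩⟩
  loopless := ⟨fun u h => h.1 rfl⟩

/-!
A coloring has no monochromatic `S_t` iff every vertex has fewer than `t` edges of each color,
so a graph with such a coloring has maximum degree at most `r (t - 1)`. Two local moves do not
decrease the number of these colorings: deleting an edge at a vertex of degree `r (t - 1)` (there
every color appears exactly `t - 1` times, so the color of the deleted edge is determined by the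
others), and adding an edge between two vertices of degree below `⌈r/2⌉ (t - 1)` (at each endpoint
fewer than half of the colors are saturated, so some color is free at both). Hence an extremal
graph with fewest edges has maximum degree below `r (t - 1)`, and among extremal graphs with this
property one with the most edges has its low-degree vertices pairwise adjacent, so there are at
most `⌈r/2⌉ (t - 1)` of them.
-/

variable {V W : Type*} {r t : ℕ}

lemma SimpleGraph.ContainsCopy.mono {K₁ K₂ : SimpleGraph V} {H : SimpleGraph W} (hK : K₁ ≤ K₂)
    (h : K₁.ContainsCopy H) : K₂.ContainsCopy H := by
  obtain ⟨f, hf⟩ := h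
  exact ⟨(Hom.ofLE hK).comp f, hf⟩

lemma containsCopy_starGraph_iff [Finite V] (K : SimpleGraph V) :
    K.ContainsCopy (_root_.starGraph t) ↔ ∃ v, t ≤ (K.neighborSet v).ncard := by
  constructor
  · rintro ⟨f, hf⟩
    refine ⟨f 0, ?_⟩
    let leaf : Fin t → K.neighborSet (f 0) := fun j =>
      ⟨f j.succ, f.map_adj ⟨(Fin.succ_ne_zero j).symm, Or.inl rfl⟩⟩
    have hleaf : Function.Injective leaf := fun a b hab =>
      Fin.succ_injective _ (hf (congrArg Subtype.val hab))
    simpa [Nat.card_coe_set_eq] using Nat.card_le_card_of_injective leaf hleaf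
  · rintro ⟨v, hv⟩
    have := Fintype.ofFinite (K.neighborSet v)
    obtain ⟨g⟩ := Function.Embedding.nonempty_of_card_le (α := Fin t) (β := K.neighborSet v)
      (by rwa [Fintype.card_fin, ← Nat.card_eq_fintype_card, Nat.card_coe_set_eq])
    refine ⟨⟨Fin.cases v fun j => g j, ?_⟩, ?_⟩
    · rintro a b ⟨hab, rfl | rfl⟩
      · obtain ⟨j, rfl⟩ := Fin.exists_succ_eq.mpr hab.symm
        exact (g j).2
      · obtain ⟨j, rfl⟩ := Fin.exists_succ_eq.mpr hab
        exact (g j).2.symm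
    · intro a b hab
      induction a using Fin.cases <;> induction b using Fin.cases
      · rfl
      · exact absurd hab (K.ne_of_adj (g _).2)
      · exact absurd hab.symm (K.ne_of_adj (g _).2)
      · simpa using g.injective (Subtype.ext hab)

section Coloring

variable {G : SimpleGraph V} {c : G.edgeSet → Fin r}

lemma colorClass_adj {i : Fin r} {v u : V} :
    (colorClass G c i).Adj v u ↔ ∃ h : G.Adj v u, c ⟨s(v, u), h⟩ = i := by
  simp only [colorClass, fromEdgeSet_adj, Set.mem_ofPred_eq, mem_edgeSet]
  exact ⟨fun ⟨h, _⟩ => h, fun ⟨hvu, hc⟩ => ⟨⟨hvu, hc⟩, hvu.ne⟩⟩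

variable (G c) in
noncomputable def colorDegree (i : Fin r) (v : V) : ℕ :=
  ((colorClass G c i).neighborSet v).ncard

lemma colorClass_comp_inclusion_le {G' : SimpleGraph V} (h : G' ≤ G) (i : Fin r) :
    colorClass G' (c ∘ Set.inclusion (edgeSet_mono h)) i ≤ colorClass G c i := fun _ _ hvu => by
  obtain ⟨hadj, hc⟩ := colorClass_adj.mp hvu
  exact colorClass_adj.mpr ⟨h hadj, hc⟩

lemma HasMonoCopy.of_comp_inclusion {G' : SimpleGraph V} {H : SimpleGraph W} (h : G' ≤ G)
    (hc : HasMonoCopy G' H (c ∘ Set.inclusion (edgeSet_mono h))) : HasMonoCopy G H c := by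
  obtain ⟨i, hi⟩ := hc
  exact ⟨i, hi.mono (colorClass_comp_inclusion_le h i)⟩

lemma not_hasMonoCopy_starGraph_iff [Finite V] :
    ¬ HasMonoCopy G (_root_.starGraph t) c ↔ ∀ i v, colorDegree G c i v < t := by
  simp [HasMonoCopy, containsCopy_starGraph_iff, colorDegree]

lemma sum_colorDegree [Finite V] (v : V) :
    ∑ i, colorDegree G c i v = (G.neighborSet v).ncard := by
  let color : G.neighborSet v → Fin r := fun u => c ⟨s(v, u), u.2⟩
  rw [← Nat.card_coe_set_eq, ← Nat.card_congr (Equiv.sigmaFiberEquiv color), Nat.card_sigma]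
  refine Finset.sum_congr rfl fun i _ => ?_
  rw [colorDegree, ← Nat.card_coe_set_eq]
  exact Nat.card_congr ((Equiv.subtypeSubtypeEquivSubtypeExists _ _).trans
    (Equiv.subtypeEquivRight fun u => colorClass_adj.symm)).symm

lemma ncard_neighborSet_le_of_not_hasMonoCopy [Finite V]
    (hc : ¬ HasMonoCopy G (_root_.starGraph t) c) (v : V) :
    (G.neighborSet v).ncard ≤ r * (t - 1) := by
  rw [not_hasMonoCopy_starGraph_iff] at hc
  rw [← sum_colorDegree]
  simpa using Finset.sum_le_sum fun i (_ : i ∈ Finset.univ) => Nat.le_sub_one_of_lt (hc i v)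

lemma colorDegree_eq_of_le_ncard_neighborSet [Finite V] {v : V}
    (hc : ∀ i, colorDegree G c i v < t) (hv : r * (t - 1) ≤ (G.neighborSet v).ncard) (i : Fin r) :
    colorDegree G c i v = t - 1 := by
  have hle : ∀ i ∈ Finset.univ, colorDegree G c i v ≤ t - 1 :=
    fun i _ => Nat.le_sub_one_of_lt (hc i)
  refine (Finset.sum_eq_sum_iff_of_le hle).mp (le_antisymm (Finset.sum_le_sum hle) ?_) i
    (Finset.mem_univ i)
  simpa [sum_colorDegree] using hv

lemma card_filter_le_colorDegree_mul_le [Finite V] (k : ℕ) (v : V) :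
    #{i | k ≤ colorDegree G c i v} * k ≤ (G.neighborSet v).ncard := by
  rw [← sum_colorDegree, ← smul_eq_mul, ← Finset.sum_const]
  exact (Finset.sum_le_sum fun i hi => (Finset.mem_filter.mp hi).2).trans
    (Finset.sum_le_sum_of_subset (Finset.filter_subset _ _))

lemma goodCount_starGraph_bot_pos [Finite V] (ht : 0 < t) :
    0 < goodCount r (_root_.starGraph t) (⊥ : SimpleGraph V) := by
  let c : (⊥ : SimpleGraph V).edgeSet → Fin r := fun e => absurd e.2 (by simp)
  have hc : ¬ HasMonoCopy ⊥ (_root_.starGraph t) c := by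
    rw [not_hasMonoCopy_starGraph_iff]
    intro i v
    have : (colorClass ⊥ c i).neighborSet v = ∅ :=
      Set.eq_empty_of_forall_notMem fun u hu => (colorClass_adj.mp hu).1
    rwa [colorDegree, this, Set.ncard_empty]
  have : Nonempty {c // ¬ HasMonoCopy ⊥ (_root_.starGraph t) c} := ⟨⟨_, hc⟩⟩
  exact Nat.card_pos

end Coloring

lemma SimpleGraph.IsClique.ncard_le_of_ncard_neighborSet_lt [Finite V] {G : SimpleGraph V}
    {s : Set V} {k : ℕ} (hs : G.IsClique s) (hk : ∀ v ∈ s, (G.neighborSet v).ncard < k) :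
    s.ncard ≤ k := by
  obtain rfl | ⟨v, hv⟩ := s.eq_empty_or_nonempty
  · simp
  have hsub : s \ {v} ⊆ G.neighborSet v := fun w ⟨hw, hwv⟩ => hs hv hw (Ne.symm hwv)
  calc s.ncard = (s \ {v}).ncard + 1 := (Set.ncard_sdiff_singleton_add_one hv).symm
    _ ≤ (G.neighborSet v).ncard + 1 := by grw [Set.ncard_le_ncard hsub]
    _ ≤ k := hk v hv

lemma neighborSet_sup_edge_of_ne (A : SimpleGraph V) {u v w : V} (hu : w ≠ u) (hv : w ≠ v) :
    (A ⊔ edge u v).neighborSet w = A.neighborSet w := by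
  ext x
  simp [edge_adj, hu, hv]

lemma ncard_neighborSet_sup_edge_le [Finite V] (A : SimpleGraph V) (u v w : V) :
    ((A ⊔ edge u v).neighborSet w).ncard ≤ (A.neighborSet w).ncard + 1 := by
  have hedge : ((edge u v).neighborSet w).ncard ≤ 1 := (Set.ncard_le_one).mpr fun x hx y hy => by
    rw [mem_neighborSet, edge_adj] at hx hy
    grind
  rw [neighborSet_sup]
  exact (Set.ncard_union_le _ _).trans (Nat.add_le_add_left hedge _)

section Extension

variable {G G' : SimpleGraph V}

open Classical in
noncomputable def extendColoring (c : G.edgeSet → Fin r) (i : Fin r) : G'.edgeSet → Fin r :=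
  fun e => if h : e.1 ∈ G.edgeSet then c ⟨e.1, h⟩ else i

lemma extendColoring_comp_inclusion (h : G ≤ G') (c : G.edgeSet → Fin r) (i : Fin r) :
    extendColoring c i ∘ Set.inclusion (edgeSet_mono h) = c := by
  funext e
  simp [extendColoring, e.2]

lemma colorClass_sup_edge_extendColoring_le (c : G.edgeSet → Fin r) (i j : Fin r) (u v : V) :
    colorClass (G ⊔ edge u v) (extendColoring c i) j ≤
      colorClass G c j ⊔ if j = i then edge u v else ⊥ := by
  intro w x hwx
  obtain ⟨hadj, hc⟩ := colorClass_adj.mp hwx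
  by_cases hG : G.Adj w x
  · refine Or.inl (colorClass_adj.mpr ⟨hG, ?_⟩)
    simpa [extendColoring, hG] using hc
  · have hij : i = j := by simpa [extendColoring, hG] using hc
    simp only [sup_adj, hG, false_or] at hadj
    simpa [hij] using Or.inr hadj

end Extension

section LocalMoves

variable [Finite V] {G : SimpleGraph V}

lemma goodCount_starGraph_le_deleteEdges {v u : V} (hvu : G.Adj v u)
    (hv : r * (t - 1) ≤ (G.neighborSet v).ncard) :
    goodCount r (_root_.starGraph t) G ≤
      goodCount r (_root_.starGraph t) (G.deleteEdges {s(v, u)}) := by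
  have hle := G.deleteEdges_le {s(v, u)}
  refine Nat.card_le_card_of_injective
    (fun c => ⟨c.1 ∘ Set.inclusion (edgeSet_mono hle), fun h => c.2 (h.of_comp_inclusion hle)⟩) ?_
  rintro ⟨c₁, hc₁⟩ ⟨c₂, hc₂⟩ hres
  rw [not_hasMonoCopy_starGraph_iff] at hc₁ hc₂
  have hagree : ∀ e : G.edgeSet, e.1 ≠ s(v, u) → c₁ e = c₂ e := fun e he =>
    congrFun (congrArg Subtype.val hres) ⟨e.1, (edgeSet_deleteEdges _) ▸ ⟨e.2, he⟩⟩
  refine Subtype.ext (funext fun e => ?_)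
  by_cases he : e.1 ≠ s(v, u)
  · exact hagree e he
  obtain rfl : e = ⟨s(v, u), hvu⟩ := Subtype.ext (not_not.mp he)
  by_contra hne
  -- `c₁` uses every color exactly `t - 1` times at `v`; `c₂` repaints `vu` with one of them.
  set j := c₂ ⟨s(v, u), hvu⟩
  have hu : u ∉ (colorClass G c₁ j).neighborSet v := fun h =>
    hne (colorClass_adj.mp h).2
  have hsub : insert u ((colorClass G c₁ j).neighborSet v) ⊆
      (colorClass G c₂ j).neighborSet v := by
    rintro x (rfl | hx)
    · exact colorClass_adj.mpr ⟨hvu, rfl⟩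
    · obtain ⟨hvx, hcx⟩ := colorClass_adj.mp hx
      have hxu : x ≠ u := by rintro rfl; exact hu hx
      refine colorClass_adj.mpr ⟨hvx, ?_⟩
      rw [← hagree _ (fun h => hxu (Sym2.congr_right.mp h)), hcx]
  have hcard := Set.ncard_le_ncard hsub
  rw [Set.ncard_insert_of_notMem hu] at hcard
  have hsat := colorDegree_eq_of_le_ncard_neighborSet (fun i => hc₁ i v) hv j
  have hgood := hc₂ j v
  simp only [colorDegree] at hsat hgood
  omega

lemma exists_colorDegree_lt_of_ncard_neighborSet_lt (c : G.edgeSet → Fin r) {u v : V}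
    (hu : (G.neighborSet u).ncard < (r + 1) / 2 * (t - 1))
    (hv : (G.neighborSet v).ncard < (r + 1) / 2 * (t - 1)) :
    ∃ i, colorDegree G c i u < t - 1 ∧ colorDegree G c i v < t - 1 := by
  let saturated (w : V) : Finset (Fin r) := {i | t - 1 ≤ colorDegree G c i w}
  have hsat (w : V) (hw : (G.neighborSet w).ncard < (r + 1) / 2 * (t - 1)) :
      #(saturated w) < (r + 1) / 2 :=
    Nat.lt_of_mul_lt_mul_right ((card_filter_le_colorDegree_mul_le (t - 1) w).trans_lt hw)
  have hcard : #(saturated u ∪ saturated v) < #(Finset.univ : Finset (Fin r)) := by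
    have := Finset.card_union_le (saturated u) (saturated v)
    have := hsat u hu
    have := hsat v hv
    rw [Finset.card_univ, Fintype.card_fin]
    omega
  obtain ⟨i, -, hi⟩ := Finset.exists_mem_notMem_of_card_lt_card hcard
  exact ⟨i, by simpa [saturated, not_or, Nat.lt_sub_iff_add_lt] using hi⟩

lemma goodCount_starGraph_le_sup_edge {u v : V}
    (hu : (G.neighborSet u).ncard < (r + 1) / 2 * (t - 1))
    (hv : (G.neighborSet v).ncard < (r + 1) / 2 * (t - 1)) :
    goodCount r (_root_.starGraph t) G ≤ goodCount r (_root_.starGraph t) (G ⊔ edge u v) := by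
  have hle : G ≤ G ⊔ edge u v := le_sup_left
  choose free hfree using fun c : G.edgeSet → Fin r =>
    exists_colorDegree_lt_of_ncard_neighborSet_lt c hu hv
  have hgood (c : G.edgeSet → Fin r) (hc : ¬ HasMonoCopy G (_root_.starGraph t) c) :
      ¬ HasMonoCopy (G ⊔ edge u v) (_root_.starGraph t) (extendColoring c (free c)) := by
    rw [not_hasMonoCopy_starGraph_iff] at hc ⊢
    intro j w
    have hsub := Set.ncard_le_ncard
      (neighborSet_mono (colorClass_sup_edge_extendColoring_le c (free c) j u v) w)
    refine hsub.trans_lt ?_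
    by_cases hj : j = free c
    · rw [if_pos hj]
      by_cases hw : w = u ∨ w = v
      · have := ncard_neighborSet_sup_edge_le (colorClass G c j) u v w
        have hfree_j := hj ▸ hfree c
        simp only [colorDegree] at hfree_j
        rcases hw with rfl | rfl <;> omega
      · rw [not_or] at hw
        rw [neighborSet_sup_edge_of_ne _ hw.1 hw.2]
        exact hc _ w
    · rw [if_neg hj, sup_bot_eq]
      exact hc j w
  refine Nat.card_le_card_of_injective (fun c => ⟨extendColoring c.1 (free c.1), hgood c.1 c.2⟩) ?_
  intro c₁ c₂ h
  have := congrArg (fun c => c.1 ∘ Set.inclusion (edgeSet_mono hle)) h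
  rwa [extendColoring_comp_inclusion hle, extendColoring_comp_inclusion hle, ← Subtype.ext_iff]
    at this

end LocalMoves

section Extremal

variable {n : ℕ}

lemma goodCount_le_cMax (H : SimpleGraph W) (G : SimpleGraph (Fin n)) :
    goodCount r H G ≤ cMax r H n :=
  le_csSup (Set.finite_range (goodCount r H)).bddAbove ⟨G, rfl⟩

def IsExtremal (r : ℕ) (H : SimpleGraph W) (G : SimpleGraph (Fin n)) : Prop :=
  goodCount r H G = cMax r H n

lemma exists_isExtremal (H : SimpleGraph W) : ∃ G : SimpleGraph (Fin n), IsExtremal r H G :=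
  Nat.sSup_mem (Set.range_nonempty _) (Set.finite_range (goodCount r H)).bddAbove

lemma IsExtremal.of_goodCount_le {H : SimpleGraph W} {G G' : SimpleGraph (Fin n)}
    (hG : IsExtremal r H G) (h : goodCount r H G ≤ goodCount r H G') : IsExtremal r H G' :=
  le_antisymm (goodCount_le_cMax H G') (hG ▸ h)

lemma IsExtremal.ncard_neighborSet_lt (hr : 0 < r) (ht : 2 ≤ t) {G : SimpleGraph (Fin n)}
    (hG : IsExtremal r (_root_.starGraph t) G)
    (hmin : ∀ G' : SimpleGraph (Fin n), IsExtremal r (_root_.starGraph t) G' →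
      G.edgeSet.ncard ≤ G'.edgeSet.ncard)
    (v : Fin n) : (G.neighborSet v).ncard < r * (t - 1) := by
  have hpos : 0 < goodCount r (_root_.starGraph t) G :=
    hG ▸ (goodCount_starGraph_bot_pos (by omega)).trans_le (goodCount_le_cMax _ ⊥)
  obtain ⟨⟨⟨c, hc⟩⟩, -⟩ := Nat.card_pos_iff.mp hpos
  refine (ncard_neighborSet_le_of_not_hasMonoCopy hc v).lt_of_ne fun hv => ?_
  obtain ⟨u, hu⟩ := Set.nonempty_of_ncard_ne_zero (s := G.neighborSet v)
    (by rw [hv]; exact (Nat.mul_pos hr (by omega)).ne')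
  have hfewer : (G.deleteEdges {s(v, u)}).edgeSet.ncard < G.edgeSet.ncard := by
    rw [edgeSet_deleteEdges]
    exact Set.ncard_sdiff_singleton_lt_of_mem hu
  have := hmin _ (hG.of_goodCount_le (goodCount_starGraph_le_deleteEdges hu hv.ge))
  omega

lemma IsExtremal.isClique_setOf_ncard_neighborSet_lt (hr : 2 ≤ r) (ht : 2 ≤ t)
    {G : SimpleGraph (Fin n)} (hG : IsExtremal r (_root_.starGraph t) G)
    (hΔ : ∀ v, (G.neighborSet v).ncard < r * (t - 1))
    (hmax : ∀ G' : SimpleGraph (Fin n), IsExtremal r (_root_.starGraph t) G' →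
      (∀ v, (G'.neighborSet v).ncard < r * (t - 1)) → G'.edgeSet.ncard ≤ G.edgeSet.ncard) :
    G.IsClique {v | (G.neighborSet v).ncard < (r + 1) / 2 * (t - 1)} := by
  intro u hu v hv huv
  by_contra hadj
  have hq : (r + 1) / 2 * (t - 1) < r * (t - 1) :=
    Nat.mul_lt_mul_of_pos_right (by omega) (by omega)
  have hΔ' (w : Fin n) : ((G ⊔ edge u v).neighborSet w).ncard < r * (t - 1) := by
    by_cases hw : w = u ∨ w = v
    · have := ncard_neighborSet_sup_edge_le G u v w
      rw [Set.mem_ofPred_eq] at hu hv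
      rcases hw with rfl | rfl <;> omega
    · rw [not_or] at hw
      rw [neighborSet_sup_edge_of_ne _ hw.1 hw.2]
      exact hΔ w
  have hmore : G.edgeSet.ncard < (G ⊔ edge u v).edgeSet.ncard :=
    Set.ncard_lt_ncard (edgeSet_strict_mono (lt_sup_edge G u v huv hadj))
  have := hmax _ (hG.of_goodCount_le (goodCount_starGraph_le_sup_edge hu hv)) hΔ'
  omega

end Extremal

theorem stmt7 (r t n : ℕ) (hr : 2 ≤ r) (ht : 3 ≤ t) :
    ∃ G : SimpleGraph (Fin n),
      goodCount r (_root_.starGraph t) G = cMax r (_root_.starGraph t) n ∧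
      (∀ v : Fin n, (G.neighborSet v).ncard ≤ r * (t - 1) - 1) ∧
      {v : Fin n | (G.neighborSet v).ncard < ((r + 1) / 2) * (t - 1)}.ncard ≤
        ((r + 1) / 2) * (t - 1) + 1 := by
  let extremal := {G : SimpleGraph (Fin n) | IsExtremal r (_root_.starGraph t) G}
  let bounded := {G ∈ extremal | ∀ v, (G.neighborSet v).ncard < r * (t - 1)}
  obtain ⟨G₀, hG₀, hmin⟩ := extremal.exists_min_image (·.edgeSet.ncard) (Set.toFinite _)
    (exists_isExtremal _)
  obtain ⟨G, ⟨hG, hΔ⟩, hmax⟩ := bounded.exists_max_image (·.edgeSet.ncard) (Set.toFinite _)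
    ⟨G₀, hG₀, hG₀.ncard_neighborSet_lt (by omega) (by omega) hmin⟩
  refine ⟨G, hG, fun v => Nat.le_sub_one_of_lt (hΔ v), ?_⟩
  have hclique := hG.isClique_setOf_ncard_neighborSet_lt hr (by omega) hΔ
    fun G' hG' hΔ' => hmax G' ⟨hG', hΔ'⟩
  exact (hclique.ncard_le_of_ncard_neighborSet_lt fun v hv => hv).trans (Nat.le_succ _)
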